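/- Let X be a metric space, A a finite subset partitioned as A = A_1 ⊎ ⋯ ⊎ A_s with each A_i nonempty, and k ≥ 1 an integer. For each i let M_i ⊆ A_i be nonempty with |M_i| ≤ k and π_i : A_i → M_i an assignment; let π : A → M be the combined assignment with M = ∪_i M_i, let L = ∑_{j∈A} d(j, π(j)), and give each m ∈ M the weight w(m) = |{ j ∈ A : π(j) = m }|. Let γ ≥ 1 and suppose K ⊆ M is nonempty with |K| ≤ k and ∑_{m∈M} w(m)·d(m,K) ≤ γ · min { ∑_{m∈M} w(m)·d(m,K') : K' ⊆ M nonempty, |K'| ≤ k }. Then ∑_{j∈A} d(j,K) ≤ 2γ·( L + Cmed(A,k,0) ) + L. -/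

import Mathlib

/-!
Serving each point `j` through its precluster center `π j` costs at most `d(j, π j)` extra, so the
cost of `K` on `A` is at most its weighted cost on `M` plus `L`. Conversely, snapping the centers
of an optimal solution on `A` to their nearest points of `M` at most doubles every distance from
`M`, so the weighted optimum on `M` is at most `2 (L + Cmed(A,k,0))`.
-/

open Metric Finset

/-- The (k,t)-median cost of a finite point set `S`. -/
noncomputable def medCost {X : Type*} [MetricSpace X] [DecidableEq X]
    (S : Finset X) (k t : ℕ) : ℝ :=
  sInf { c : ℝ | ∃ K O : Finset X, K ⊆ S ∧ K.Nonempty ∧ K.card ≤ k ∧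
    O ⊆ S ∧ O.card ≤ t ∧ c = ∑ p ∈ S \ O, infDist p (K : Set X) }

theorem sum_card_filter_mul_eq_sum_comp {ι α R : Type*} [DecidableEq α] [NonAssocSemiring R]
    {s : Finset ι} {t : Finset α} {g : ι → α} (h : ∀ i ∈ s, g i ∈ t) (f : α → R) :
    ∑ b ∈ t, (#{a ∈ s | g a = b} : R) * f b = ∑ a ∈ s, f (g a) := by
  rw [← sum_fiberwise_of_maps_to h]
  refine sum_congr rfl fun b _ => ?_
  rw [sum_congr rfl fun a ha => congrArg f (mem_filter.1 ha).2, sum_const, nsmul_eq_mul]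

section KMedian

variable {X : Type*} [MetricSpace X]

theorem le_medCost_zero [DecidableEq X] {S : Finset X} {k : ℕ} {b : ℝ} (hS : S.Nonempty)
    (hk : 1 ≤ k) (h : ∀ K ⊆ S, K.Nonempty → K.card ≤ k → b ≤ ∑ p ∈ S, infDist p (K : Set X)) :
    b ≤ medCost S k 0 := by
  obtain ⟨p, hp⟩ := hS
  refine le_csInf
    ⟨_, {p}, ∅, by simpa, singleton_nonempty p, by simpa, empty_subset _, by simp, rfl⟩ ?_
  rintro _ ⟨K, O, hKS, hK, hKk, -, hO, rfl⟩
  rw [card_eq_zero.1 (Nat.le_zero.1 hO), sdiff_empty]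
  exact h K hKS hK hKk

/-- `K'` is the image of `K` under a nearest-point map to `M`: for `y ∈ M`, the snap of the center
`c` nearest to `y` lies within `d(c, y)` of `c`. -/
theorem exists_subset_infDist_le_two_mul [DecidableEq X] {M K : Finset X} (hM : M.Nonempty)
    (hK : K.Nonempty) : ∃ K' ⊆ M, K'.Nonempty ∧ K'.card ≤ K.card ∧
      ∀ y ∈ M, infDist y (K' : Set X) ≤ 2 * infDist y (K : Set X) := by
  choose snap hsnapM hsnap using fun x => exists_min_image M (dist x) hM
  refine ⟨K.image snap, fun _ hx => ?_, hK.image snap, card_image_le, fun y hy => ?_⟩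
  · obtain ⟨c, -, rfl⟩ := mem_image.1 hx
    exact hsnapM c
  · obtain ⟨c, hc, hyc⟩ :=
      K.finite_toSet.isCompact.exists_infDist_eq_dist (coe_nonempty.2 hK) y
    calc infDist y (K.image snap : Set X)
        ≤ dist y (snap c) := infDist_le_dist_of_mem (by simpa using mem_image_of_mem snap hc)
      _ ≤ dist y c + dist c (snap c) := dist_triangle _ _ _
      _ ≤ dist y c + dist c y := by gcongr; exact hsnap c y hy
      _ = 2 * infDist y (K : Set X) := by rw [dist_comm c y, hyc]; ring

theorem sInf_sum_infDist_comp_le [DecidableEq X] {A M : Finset X} {π : X → X} {k : ℕ}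
    (hπ : ∀ j ∈ A, π j ∈ M) (hA : A.Nonempty) (hk : 1 ≤ k) :
    sInf { c : ℝ | ∃ K ⊆ M, K.Nonempty ∧ K.card ≤ k ∧ c = ∑ j ∈ A, infDist (π j) (K : Set X) } ≤
      2 * (∑ j ∈ A, dist j (π j) + medCost A k 0) := by
  set S := { c : ℝ | ∃ K ⊆ M, K.Nonempty ∧ K.card ≤ k ∧ c = ∑ j ∈ A, infDist (π j) (K : Set X) }
  have hM : M.Nonempty := let ⟨j, hj⟩ := hA; ⟨π j, hπ j hj⟩
  have hS : BddBelow S := ⟨0, by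
    rintro _ ⟨K, -, -, -, rfl⟩
    exact sum_nonneg fun _ _ => infDist_nonneg⟩
  suffices sInf S / 2 - ∑ j ∈ A, dist j (π j) ≤ medCost A k 0 by linarith
  refine le_medCost_zero hA hk fun K _ hK hKk => ?_
  obtain ⟨K', hK'M, hK', hK'card, hK'le⟩ := exists_subset_infDist_le_two_mul hM hK
  have hopt : sInf S ≤ ∑ j ∈ A, infDist (π j) (K' : Set X) :=
    csInf_le hS ⟨K', hK'M, hK', hK'card.trans hKk, rfl⟩
  have hsnap : ∑ j ∈ A, infDist (π j) (K' : Set X) ≤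
      2 * ∑ j ∈ A, (dist j (π j) + infDist j (K : Set X)) := by
    rw [mul_sum]
    gcongr with j hj
    calc infDist (π j) (K' : Set X) ≤ 2 * infDist (π j) (K : Set X) := hK'le _ (hπ j hj)
      _ ≤ 2 * (dist j (π j) + infDist j (K : Set X)) := by
        rw [dist_comm, add_comm]; gcongr; exact infDist_le_infDist_add_dist
  rw [sum_add_distrib] at hsnap
  linarith

end KMedian

theorem approx_weighted_solution_to_global_general {X : Type*} [MetricSpace X] [DecidableEq X]
    {s : ℕ} (𝒜 : Fin s → Finset X)
    (A : Finset X) (hA : A = Finset.univ.biUnion 𝒜)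
    (k : ℕ)
    (Mi : Fin s → Finset X) (hMisub : ∀ i, Mi i ⊆ 𝒜 i)
    (π : X → X) (hπ : ∀ i, ∀ j ∈ 𝒜 i, π j ∈ Mi i)
    (M : Finset X) (hM : M = Finset.univ.biUnion Mi)
    (L : ℝ) (hL : L = ∑ j ∈ A, dist j (π j))
    (w : X → ℝ) (hw : ∀ m, w m = ((A.filter fun j => π j = m).card : ℝ))
    (γ : ℝ) (hγ : 1 ≤ γ)
    (K : Finset X) (hKsub : K ⊆ M) (hKne : K.Nonempty) (hKcard : K.card ≤ k)
    (hKapprox : ∑ m ∈ M, w m * infDist m (K : Set X) ≤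
      γ * sInf { c : ℝ | ∃ K' : Finset X, K' ⊆ M ∧ K'.Nonempty ∧ K'.card ≤ k ∧
        c = ∑ m ∈ M, w m * infDist m (K' : Set X) }) :
    ∑ j ∈ A, infDist j (K : Set X) ≤ 2 * γ * (L + medCost A k 0) + L := by
  have hMA : M ⊆ A := by rw [hM, hA]; exact biUnion_mono fun i _ => hMisub i
  have hπA : ∀ j ∈ A, π j ∈ M := by
    intro j hj
    obtain ⟨i, -, hi⟩ := mem_biUnion.1 (hA ▸ hj)
    exact hM ▸ mem_biUnion.2 ⟨i, mem_univ i, hπ i j hi⟩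
  have hweighted : ∀ K' : Finset X,
      ∑ m ∈ M, w m * infDist m (K' : Set X) = ∑ j ∈ A, infDist (π j) (K' : Set X) := by
    intro K'
    simp_rw [hw]
    exact sum_card_filter_mul_eq_sum_comp hπA _
  have hopt := sInf_sum_infDist_comp_le hπA (hKne.mono (hKsub.trans hMA))
    (hKne.card_pos.trans_le hKcard)
  simp_rw [← hweighted, ← hL] at hopt
  calc ∑ j ∈ A, infDist j (K : Set X)
      ≤ ∑ j ∈ A, (infDist (π j) (K : Set X) + dist j (π j)) :=
        sum_le_sum fun j _ => infDist_le_infDist_add_dist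
    _ = ∑ m ∈ M, w m * infDist m (K : Set X) + L := by rw [sum_add_distrib, hweighted, hL]
    _ ≤ γ * (2 * (L + medCost A k 0)) + L := by
        gcongr
        exact hKapprox.trans (by gcongr)
    _ = 2 * γ * (L + medCost A k 0) + L := by ring

/-- Theorem 2.1 (consequence): a γ-approximate weighted k-median solution on the
preclustering centers yields a k-median solution on `A` of cost at most
`2γ(L + Cmed(A,k,0)) + L`. -/
theorem approx_weighted_solution_to_global {X : Type*} [MetricSpace X] [DecidableEq X]
    {s : ℕ} (hs : 0 < s) (𝒜 : Fin s → Finset X)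
    (hdisj : ∀ i j, i ≠ j → Disjoint (𝒜 i) (𝒜 j))
    (hne : ∀ i, (𝒜 i).Nonempty)
    (A : Finset X) (hA : A = Finset.univ.biUnion 𝒜)
    (k : ℕ) (hk : 1 ≤ k)
    (Mi : Fin s → Finset X) (hMisub : ∀ i, Mi i ⊆ 𝒜 i)
    (hMine : ∀ i, (Mi i).Nonempty) (hMicard : ∀ i, (Mi i).card ≤ k)
    (π : X → X) (hπ : ∀ i, ∀ j ∈ 𝒜 i, π j ∈ Mi i)
    (M : Finset X) (hM : M = Finset.univ.biUnion Mi)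
    (L : ℝ) (hL : L = ∑ j ∈ A, dist j (π j))
    (w : X → ℝ) (hw : ∀ m, w m = ((A.filter fun j => π j = m).card : ℝ))
    (γ : ℝ) (hγ : 1 ≤ γ)
    (K : Finset X) (hKsub : K ⊆ M) (hKne : K.Nonempty) (hKcard : K.card ≤ k)
    (hKapprox : ∑ m ∈ M, w m * infDist m (K : Set X) ≤
      γ * sInf { c : ℝ | ∃ K' : Finset X, K' ⊆ M ∧ K'.Nonempty ∧ K'.card ≤ k ∧
        c = ∑ m ∈ M, w m * infDist m (K' : Set X) }) :
    ∑ j ∈ A, infDist j (K : Set X) ≤ 2 * γ * (L + medCost A k 0) + L :=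
  approx_weighted_solution_to_global_general 𝒜 A hA k Mi hMisub π hπ M hM L hL w hw γ hγ K hKsub
    hKne hKcard hKapprox
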